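/- Let E : ℝ → Matrix (Fin 3) (Fin 3) ℝ and Ω : ℝ → ℝ³ be such that E is differentiable, E(t)ᵀ E(t) = I₃ for all t, and E′(t) = E(t) · Ω̂(t) for all t (attitude kinematics with body angular velocity Ω). For each t let η(t) ∈ ℝ³ be the unique vector with η̂(t) = E(t) − E(t)ᵀ. Then the error function t ↦ trace(I₃ − E(t)) is differentiable and d/dt [trace(I₃ − E(t))] = ⟨η(t), Ω(t)⟩ (the Euclidean inner product of η(t) and Ω(t)). -/

import Mathlib

open Matrix

attribute [local instance] Matrix.normedAddCommGroup Matrix.normedSpace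

/-- The hat map sending `Ω ∈ ℝ³` to the skew-symmetric matrix `Ω̂`. -/
def hat (Ω : EuclideanSpace ℝ (Fin 3)) : Matrix (Fin 3) (Fin 3) ℝ :=
  !![0, -Ω 2, Ω 1; Ω 2, 0, -Ω 0; -Ω 1, Ω 0, 0]

/-!
Differentiating `trace (I₃ - E)` along `Ė = E Ω̂` gives `-trace (E Ω̂)`. Since `Ω̂` is
skew-symmetric, `trace (Eᵀ Ω̂) = -trace (E Ω̂)`, so `-trace (E Ω̂) = -½ trace ((E - Eᵀ) Ω̂)
= -½ trace (η̂ Ω̂)`, and `trace (η̂ Ω̂) = -2 ⟨η, Ω⟩` is the polarised form of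
`‖Ω̂‖²_F = 2 ‖Ω‖²`.
-/

theorem HasDerivAt.matrix_trace {𝕜 : Type*} [NontriviallyNormedField 𝕜] [CompleteSpace 𝕜]
    {n : Type*} [Fintype n]
    {f : 𝕜 → Matrix n n 𝕜} {f' : Matrix n n 𝕜} {x : 𝕜} (hf : HasDerivAt f f' x) :
    HasDerivAt (fun s => (f s).trace) f'.trace x :=
  (traceLinearMap n 𝕜 𝕜).toContinuousLinearMap.hasFDerivAt.comp_hasDerivAt x hf

theorem Matrix.trace_transpose_mul_of_transpose_eq_neg {R : Type*} [CommRing R] {n : Type*}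
    [Fintype n] (A : Matrix n n R) {B : Matrix n n R} (hB : Bᵀ = -B) :
    (Aᵀ * B).trace = -(A * B).trace := by
  rw [← trace_transpose, transpose_mul, transpose_transpose, hB, neg_mul, trace_neg, trace_mul_comm]

theorem hat_transpose (ω : EuclideanSpace ℝ (Fin 3)) : (hat ω)ᵀ = -hat ω := by
  ext i j
  fin_cases i <;> fin_cases j <;> simp [hat]

theorem trace_hat_mul_hat (η ω : EuclideanSpace ℝ (Fin 3)) :
    (hat η * hat ω).trace = -2 * inner ℝ η ω := by
  simp only [hat, trace, diag, mul_apply, Fin.sum_univ_three, of_apply, cons_val, PiLp.inner_apply,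
    RCLike.inner_apply, conj_trivial]
  ring

theorem inner_eq_neg_trace_mul_hat {A : Matrix (Fin 3) (Fin 3) ℝ} {η : EuclideanSpace ℝ (Fin 3)}
    (hη : hat η = A - Aᵀ) (ω : EuclideanSpace ℝ (Fin 3)) :
    inner ℝ η ω = -(A * hat ω).trace := by
  have h := trace_hat_mul_hat η ω
  rw [hη, sub_mul, trace_sub, trace_transpose_mul_of_transpose_eq_neg A (hat_transpose ω)] at h
  linarith

theorem deriv_error_function_general
    (E : ℝ → Matrix (Fin 3) (Fin 3) ℝ)
    (Ω η : ℝ → EuclideanSpace ℝ (Fin 3))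
    (hE : Differentiable ℝ E)
    (hkin : ∀ t, deriv E t = E t * hat (Ω t))
    (hη : ∀ t, hat (η t) = E t - (E t)ᵀ) :
    ∀ t : ℝ, HasDerivAt (fun s => (1 - E s).trace) ((inner ℝ (η t) (Ω t) : ℝ)) t := by
  intro t
  have hE' : HasDerivAt E (E t * hat (Ω t)) t := hkin t ▸ (hE t).hasDerivAt
  have htrace := hE'.matrix_trace.const_sub (1 : Matrix (Fin 3) (Fin 3) ℝ).trace
  rw [inner_eq_neg_trace_mul_hat (hη t)]
  simpa only [trace_sub] using htrace

/-- **The vector `η` with `η̂ = E - Eᵀ` is the gradient of `V(E) = trace(I₃ - E)`:**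
along any attitude trajectory `Ė = E Ω̂` with `Eᵀ E = I₃`, the error function
`t ↦ trace(I₃ - E(t))` is differentiable with derivative `⟨η(t), Ω(t)⟩`. -/
theorem deriv_error_function
    (E : ℝ → Matrix (Fin 3) (Fin 3) ℝ)
    (Ω η : ℝ → EuclideanSpace ℝ (Fin 3))
    (hE : Differentiable ℝ E)
    (horth : ∀ t, (E t)ᵀ * E t = 1)
    (hkin : ∀ t, deriv E t = E t * hat (Ω t))
    (hη : ∀ t, hat (η t) = E t - (E t)ᵀ) :
    ∀ t : ℝ, HasDerivAt (fun s => (1 - E s).trace) ((inner ℝ (η t) (Ω t) : ℝ)) t :=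
  deriv_error_function_general E Ω η hE hkin hη
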